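/- arXiv:1605.09575 — 3 statements merged into one kernel-verified Lean document; each statement's English description precedes it below -/
import Mathlib

section
/- Let λ be a partition of 2n in which every even part has even multiplicity (a type D partition). Then the following are equivalent: (i) the transpose λ^t is a type C partition, i.e. every odd part of λ^t has even multiplicity; (ii) for every even part e of λ, the number of parts of λ strictly greater than e is even; (iii) writing the parts in weakly decreasing order as r_{2k+1} ≥ r_{2k} ≥ ⋯ ≥ r_0 (the number of parts of a type D partition is automatically even), the even parts occur precisely in consecutive equal pairs of the form r_{2l−1} = r_{2l−2}. (These equivalent conditions characterize the special nilpotent orbits of SO(2n,ℂ); in particular every very even partition, i.e. one whose parts are all even and all of even multiplicity, satisfies them.) -/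
/-- `l` is a partition of `N`: a weakly decreasing list of positive integers with sum `N`. -/
def IsPartitionOf (N : ℕ) (l : List ℕ) : Prop :=
  l.Pairwise (· ≥ ·) ∧ (∀ x ∈ l, 0 < x) ∧ l.sum = N

/-- the `j`-th column length `c_j(λ) = #{i : λ_i ≥ j}`. -/
def colLen (l : List ℕ) (j : ℕ) : ℕ := l.countP (fun x => decide (j ≤ x))

/-- the transpose partition, as the list `c_1 ≥ c_2 ≥ ⋯ ≥ c_{λ_1}` of column lengths. -/
def transposeList (l : List ℕ) : List ℕ :=
  (List.range (l.foldr max 0)).map (fun j => colLen l (j + 1))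

/-!
Write `λ_i = l.getD i 0` for the parts counted from the largest, so that the parts equal to
`e > 0` occupy the block of positions `[c_{e+1}, c_e)`, of length `count e`. The transpose has
`λ_{c-1} - λ_c` parts equal to `c`, so (i) says that `λ_{2i} ≡ λ_{2i+1} (mod 2)` for all `i`,
while (ii) says that every block of an even part starts, and hence (type D) also ends, at an
even position, i.e. that (iii) holds; here the number of parts is even, because the odd parts
have the parity of `2n` and the even ones come in pairs. The only nontrivial step is
(i) ⇒ (ii): if the block of an even part `e` started at an odd position `2i+1`, then
`λ_{2i} > e` is even by (i), its block ends at `2i+1` and has even length, so it too starts at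
an odd position; this cannot go on forever.
-/

namespace List

theorem getD_mem_of_ne {α : Type*} {l : List α} {i : ℕ} {d : α} (h : l.getD i d ≠ d) :
    l.getD i d ∈ l := by
  rcases lt_or_ge i l.length with hi | hi
  · rw [getD_eq_getElem _ _ hi]; exact getElem_mem hi
  · exact absurd (getD_eq_default _ _ hi) h

theorem getD_le_foldr_max (l : List ℕ) (i : ℕ) : l.getD i 0 ≤ l.foldr max 0 := by
  rcases lt_or_ge i l.length with hi | hi
  · rw [getD_eq_getElem _ _ hi]; exact le_max_of_le (getElem_mem hi) le_rfl
  · rw [getD_eq_default _ _ hi]; exact Nat.zero_le _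

theorem countP_range_eq_sub {M a b : ℕ} (hb : b ≤ M) :
    (range M).countP (fun j => decide (a ≤ j ∧ j < b)) = b - a := by
  rw [← Multiset.coe_countP, ← Multiset.range, ← Finset.range_val,
    Multiset.countP_eq_card_filter, ← Finset.filter_val, Finset.card_val, ← Nat.card_Ico]
  congr 1
  ext j
  simp only [Finset.mem_filter, Finset.mem_range, Finset.mem_Ico]
  omega

theorem even_countP_of_even_count {α : Type*} [DecidableEq α] {l : List α} {p : α → Bool}
    (h : ∀ x ∈ l, p x → Even (l.count x)) : Even (l.countP p) := by
  rw [← sum_map_count_dedup_filter_eq_countP, even_iff_two_dvd]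
  refine dvd_sum fun _ hy => ?_
  obtain ⟨x, hx, rfl⟩ := mem_map.mp hy
  obtain ⟨hxl, hpx⟩ := mem_filter.mp hx
  exact (h x (mem_dedup.mp hxl) hpx).two_dvd

theorem even_sum_iff_even_countP_odd (l : List ℕ) : Even l.sum ↔ Even (l.countP (Odd ·)) := by
  induction l with
  | nil => simp
  | cons a t ih =>
    rcases Nat.even_or_odd a with ha | ha
    · simp [ha, Nat.even_add, ih, Nat.not_odd_iff_even.mpr ha]
    · simp [ha, Nat.even_add, ih, Nat.not_even_iff_odd.mpr ha, Nat.even_add_one]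

end List

open List

section ColumnLengths

variable {l : List ℕ}

theorem lt_colLen_iff (hs : l.Pairwise (· ≥ ·)) {j : ℕ} (hj : 0 < j) (i : ℕ) :
    i < colLen l j ↔ j ≤ l.getD i 0 := by
  induction hs generalizing i with
  | nil => simp [colLen]; omega
  | @cons a t ha _ ih =>
    by_cases h : j ≤ a
    · have hcol : colLen (a :: t) j = colLen t j + 1 := by simp [colLen, h]
      cases i with
      | zero => simp [hcol, h]
      | succ i => simp [hcol, ih]
    · have hle : ∀ x ∈ a :: t, x ≤ a := fun x hx => by
        rcases mem_cons.mp hx with rfl | hx; exacts [le_rfl, ha x hx]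
      have hcol : colLen (a :: t) j = 0 :=
        countP_eq_zero.mpr fun x hx => by simpa using (hle x hx).trans_lt (not_le.mp h)
      have : (a :: t).getD i 0 ≤ a :=
        (getD_le_foldr_max _ i).trans (max_le_of_forall_le _ _ hle)
      rw [hcol]; omega

theorem getD_eq_iff_colLen (hs : l.Pairwise (· ≥ ·)) {e : ℕ} (he : 0 < e) (i : ℕ) :
    l.getD i 0 = e ↔ colLen l (e + 1) ≤ i ∧ i < colLen l e := by
  have := lt_colLen_iff hs he i
  have := lt_colLen_iff hs (Nat.add_one_pos e) i
  omega

theorem colLen_eq_colLen_succ_add_count (l : List ℕ) (e : ℕ) :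
    colLen l e = colLen l (e + 1) + l.count e := by
  induction l with
  | nil => rfl
  | cons a t ih =>
    simp only [colLen, countP_cons, count_cons] at ih ⊢
    rcases lt_trichotomy a e with h | rfl | h
    · simp [ih, h.not_ge, h.ne, show ¬ e + 1 ≤ a by omega]
    · simp [ih]; omega
    · simp [ih, h.le, h.ne', show e + 1 ≤ a by omega]; omega

theorem count_transposeList (hs : l.Pairwise (· ≥ ·)) {c : ℕ} (hc : 0 < c) :
    (transposeList l).count c = l.getD (c - 1) 0 - l.getD c 0 := by
  rw [transposeList, count, countP_map, ← countP_range_eq_sub (getD_le_foldr_max l (c - 1))]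
  congr 1
  funext j
  have := lt_colLen_iff hs (Nat.add_one_pos j) (c - 1)
  have := lt_colLen_iff hs (Nat.add_one_pos j) c
  rw [Function.comp_apply, Bool.eq_iff_iff, beq_iff_eq, decide_eq_true_eq]
  omega

theorem forall_odd_even_count_transposeList_iff (hs : l.Pairwise (· ≥ ·)) :
    (∀ c ∈ transposeList l, Odd c → Even ((transposeList l).count c)) ↔
      ∀ i, Even (l.getD (2 * i) 0 - l.getD (2 * i + 1) 0) := by
  have hcount (i : ℕ) :
      (transposeList l).count (2 * i + 1) = l.getD (2 * i) 0 - l.getD (2 * i + 1) 0 := by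
    simpa using count_transposeList hs (Nat.add_one_pos (2 * i))
  refine ⟨fun h i => ?_, fun h c _ ⟨i, hi⟩ => hi ▸ hcount i ▸ h i⟩
  rw [← hcount]
  by_cases hmem : 2 * i + 1 ∈ transposeList l
  · exact h _ hmem (odd_two_mul_add_one i)
  · rw [count_eq_zero_of_not_mem hmem]; exact .zero

end ColumnLengths

theorem even_length_of_typeD {l : List ℕ} (hsum : Even l.sum)
    (hD : ∀ e ∈ l, Even e → Even (l.count e)) : Even l.length := by
  rw [length_eq_countP_add_countP (Odd ·)]
  refine ((even_sum_iff_even_countP_odd l).mp hsum).add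
    (even_countP_of_even_count fun x hx hp => hD x hx ?_)
  simpa using hp

/-- Condition (iii), read from the largest part: positions `2i` and `2i+1` hold equal parts as
soon as one of them is even. -/
def EvenPartsPaired (l : List ℕ) : Prop :=
  ∀ i, 2 * i + 1 < l.length → (Even (l.getD (2 * i) 0) ∨ Even (l.getD (2 * i + 1) 0)) →
    l.getD (2 * i) 0 = l.getD (2 * i + 1) 0

section EvenPartsPaired

variable {l : List ℕ}

theorem evenPartsPaired_iff_forall_getD (hm : Even l.length) :
    EvenPartsPaired l ↔ ∀ p < l.length, Even (l.getD p 0) →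
      (Odd p → l.getD (p - 1) 0 = l.getD p 0) ∧
      (Even p → p + 1 < l.length ∧ l.getD (p + 1) 0 = l.getD p 0) := by
  obtain ⟨k, hk⟩ := hm
  constructor
  · rintro h p hp hev
    refine ⟨fun ⟨i, hi⟩ => ?_, fun hp2 => ?_⟩
    · subst hi
      simpa using h i hp (Or.inr hev)
    · obtain ⟨i, rfl⟩ := hp2.two_dvd
      exact ⟨by omega, (h i (by omega) (Or.inl hev)).symm⟩
  · rintro h i hi (hev | hev)
    · exact ((h (2 * i) (by omega) hev).2 (even_two_mul i)).2.symm
    · simpa using (h (2 * i + 1) hi hev).1 (odd_two_mul_add_one i)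

theorem EvenPartsPaired.reverse (hm : Even l.length) (h : EvenPartsPaired l) :
    EvenPartsPaired l.reverse := by
  intro i hi hpar
  rw [length_reverse] at hi
  obtain ⟨k, hk⟩ := hm
  rw [getD_reverse _ (by omega), getD_reverse _ hi,
    show l.length - 1 - 2 * i = 2 * (k - 1 - i) + 1 by omega,
    show l.length - 1 - (2 * i + 1) = 2 * (k - 1 - i) by omega] at hpar ⊢
  exact (h (k - 1 - i) (by omega) hpar.symm).symm

theorem evenPartsPaired_reverse_iff (hm : Even l.length) :
    EvenPartsPaired l.reverse ↔ EvenPartsPaired l :=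
  ⟨fun h => by simpa using h.reverse (by simpa using hm), fun h => h.reverse hm⟩

theorem EvenPartsPaired.even_sub (hm : Even l.length) (h : EvenPartsPaired l) (i : ℕ) :
    Even (l.getD (2 * i) 0 - l.getD (2 * i + 1) 0) := by
  rcases lt_or_ge (2 * i + 1) l.length with hi | hi
  · by_cases hpar : Even (l.getD (2 * i) 0) ∨ Even (l.getD (2 * i + 1) 0)
    · rw [h i hi hpar, Nat.sub_self]
      exact .zero
    · simp only [not_or, Nat.not_even_iff_odd] at hpar
      exact Nat.Odd.sub_odd hpar.1 hpar.2
  · obtain ⟨k, hk⟩ := hm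
    rw [getD_eq_default _ _ hi, getD_eq_default _ _ (show l.length ≤ 2 * i by omega)]
    exact .zero

end EvenPartsPaired

section TypeD

variable {l : List ℕ}

theorem even_colLen_succ_of_forall_even_sub (hs : l.Pairwise (· ≥ ·))
    (hpos : ∀ x ∈ l, 0 < x) (hD : ∀ e ∈ l, Even e → Even (l.count e))
    (h : ∀ i, Even (l.getD (2 * i) 0 - l.getD (2 * i + 1) 0)) {e : ℕ} (he : e ∈ l)
    (hev : Even e) : Even (colLen l (e + 1)) := by
  induction hce : colLen l (e + 1) using Nat.strong_induction_on generalizing e with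
  | _ s ih =>
    by_contra hodd
    obtain ⟨i, rfl⟩ := Nat.not_even_iff_odd.mp hodd
    have he0 := hpos e he
    have hblock := colLen_eq_colLen_succ_add_count l e
    have hcount := count_pos_iff.mpr he
    have hfirst : l.getD (2 * i + 1) 0 = e :=
      (getD_eq_iff_colLen hs he0 _).mpr ⟨by omega, by omega⟩
    set f := l.getD (2 * i) 0 with hf
    have hfe : e + 1 ≤ f := (lt_colLen_iff hs (by omega) _).mp (by omega)
    have hfev : Even f := by
      have := h i
      rw [hfirst, Nat.even_sub (by omega)] at this
      exact this.mpr hev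
    have hfmem : f ∈ l := getD_mem_of_ne (by omega)
    have hlast : colLen l f = 2 * i + 1 := by
      have := ((getD_eq_iff_colLen hs (by omega) (2 * i)).mp hf.symm).2
      have : ¬ 2 * i + 1 < colLen l f := by rw [lt_colLen_iff hs (by omega)]; omega
      omega
    have hfblock := colLen_eq_colLen_succ_add_count l f
    obtain ⟨k, hk⟩ := hD f hfmem hfev
    have := count_pos_iff.mpr hfmem
    obtain ⟨m, hm⟩ := ih _ (by omega) hfmem hfev rfl
    omega

theorem evenPartsPaired_of_forall_even_colLen_succ (hs : l.Pairwise (· ≥ ·))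
    (hpos : ∀ x ∈ l, 0 < x) (hD : ∀ e ∈ l, Even e → Even (l.count e))
    (h : ∀ e ∈ l, Even e → Even (colLen l (e + 1))) : EvenPartsPaired l := by
  have hblock : ∀ q < l.length, Even (l.getD q 0) → ∀ p, p / 2 = q / 2 →
      l.getD p 0 = l.getD q 0 := by
    intro q hq hev p hpq
    have he0 : 0 < l.getD q 0 := by
      rw [getD_eq_getElem _ _ hq]; exact hpos _ (getElem_mem hq)
    have hmem := getD_mem_of_ne he0.ne'
    obtain ⟨a, ha⟩ := h _ hmem hev
    obtain ⟨b, hb⟩ := hD _ hmem hev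
    have := colLen_eq_colLen_succ_add_count l (l.getD q 0)
    have := (getD_eq_iff_colLen hs he0 q).mp rfl
    exact (getD_eq_iff_colLen hs he0 p).mpr (by omega)
  rintro i hi (hev | hev)
  · exact (hblock (2 * i) (by omega) hev (2 * i + 1) (by omega)).symm
  · exact hblock (2 * i + 1) hi hev (2 * i) (by omega)

theorem tfae_of_typeD (hs : l.Pairwise (· ≥ ·)) (hpos : ∀ x ∈ l, 0 < x)
    (hD : ∀ e ∈ l, Even e → Even (l.count e)) (hm : Even l.length) :
    TFAE [∀ i, Even (l.getD (2 * i) 0 - l.getD (2 * i + 1) 0),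
      ∀ e ∈ l, Even e → Even (colLen l (e + 1)),
      EvenPartsPaired l] := by
  tfae_have 1 → 2 := fun h _ => even_colLen_succ_of_forall_even_sub hs hpos hD h
  tfae_have 2 → 3 := evenPartsPaired_of_forall_even_colLen_succ hs hpos hD
  tfae_have 3 → 1 := EvenPartsPaired.even_sub hm
  tfae_finish

end TypeD

/-- For a type D partition `l` of `2n` (every even part has even multiplicity),
the following are equivalent:
(i) the transpose is of type C (every odd part of the transpose has even multiplicity);
(ii) for every even part `e`, the number of parts strictly greater than `e` is even;
(iii) writing the parts as `r_{2k+1} ≥ ⋯ ≥ r_0` (positions counted from the end,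
so `r_p = l.reverse.getD p 0`), the even parts occur precisely in consecutive equal
pairs `r_{2l-1} = r_{2l-2}`.
In particular, every very even partition (all parts even) satisfies these conditions. -/
theorem typeD_special_characterizations (n : ℕ) (l : List ℕ)
    (hpart : IsPartitionOf (2 * n) l)
    (hD : ∀ e ∈ l, Even e → Even (l.count e)) :
    List.TFAE
      [∀ e ∈ transposeList l, Odd e → Even ((transposeList l).count e),
       ∀ e ∈ l, Even e → Even (l.countP (fun x => decide (e < x))),
       ∀ p < l.length, Even (l.reverse.getD p 0) →
         (Odd p → l.reverse.getD (p - 1) 0 = l.reverse.getD p 0) ∧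
         (Even p → p + 1 < l.length ∧ l.reverse.getD (p + 1) 0 = l.reverse.getD p 0)]
    ∧ ((∀ x ∈ l, Even x) →
        ∀ e ∈ transposeList l, Odd e → Even ((transposeList l).count e)) := by
  obtain ⟨hs, hpos, hsum⟩ := hpart
  have hm : Even l.length := even_length_of_typeD (hsum ▸ even_two_mul n) hD
  have hrev := evenPartsPaired_iff_forall_getD (l := l.reverse) (by rwa [length_reverse])
  rw [length_reverse, evenPartsPaired_reverse_iff hm] at hrev
  rw [forall_odd_even_count_transposeList_iff hs, ← hrev]
  have htfae := tfae_of_typeD hs hpos hD hm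
  refine ⟨htfae, fun hall => (htfae.out 1 0).mp fun e _ _ => ?_⟩
  exact even_countP_of_even_count fun x hx _ => hD x hx (hall x hx)
end

section
/- Let λ be a special type C partition of 2n. Row procedure: pad the list of parts of λ with one zero at the end if necessary so that its length is odd; delete all odd entries; then repeatedly delete two equal adjacent entries occupying positions 2t+1 and 2t for some t ≥ 0, until no such pair remains; let the number of remaining entries be 2q_r+1. Column procedure: take the padded column list of λ (padded with zeros to odd length); repeatedly delete two equal adjacent entries at positions 2t+1 and 2t until no such pair remains; then repeatedly delete two equal adjacent entries of odd value at positions 2t and 2t−1 until no such pair remains; let the number of remaining entries be 2q_c+1. Then both counts are independent of the choices of deletions, and q_r = q_c. (This common value q is the rank of the Lusztig quotient Ā(O) ≅ (ℤ/2ℤ)^q of the corresponding special orbit O of Sp(2n,ℂ); the statement is the agreement of the row description and the column description of Ā(O).) -/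
/-- pad a list with one zero at the end if necessary so that its length is odd. -/
def padToOdd (c : List ℕ) : List ℕ := if Odd c.length then c else c ++ [0]

/-- Delete two equal adjacent entries occupying positions `2t+1` and `2t` for some `t ≥ 0`
(positions in a list of length `m` are numbered `m-1, …, 1, 0` from first to last). -/
def delStepE (L L' : List ℕ) : Prop :=
  ∃ (a : ℕ) (l₁ l₂ : List ℕ), Even l₂.length ∧ L = l₁ ++ a :: a :: l₂ ∧ L' = l₁ ++ l₂

/-- Delete two equal adjacent entries of odd value at positions `2t` and `2t-1`, `t ≥ 1`. -/
def delStepOOddVal (L L' : List ℕ) : Prop :=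
  ∃ (a : ℕ) (l₁ l₂ : List ℕ),
    Odd a ∧ Odd l₂.length ∧ L = l₁ ++ a :: a :: l₂ ∧ L' = l₁ ++ l₂

open List

@[elab_as_elim]
def List.twoStepRec {α : Type*} {motive : List α → Sort*} (nil : motive [])
    (singleton : ∀ x, motive [x]) (cons₂ : ∀ a b t, motive t → motive (a :: b :: t)) :
    ∀ l, motive l
  | [] => nil
  | [x] => singleton x
  | a :: b :: t => cons₂ a b t (twoStepRec nil singleton cons₂ t)

theorem List.pairwise_le_cons₂ {α : Type*} [Preorder α] {a b : α} {t : List α} :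
    (a :: b :: t).Pairwise (· ≤ ·) ↔ a ≤ b ∧ (∀ x ∈ t, b ≤ x) ∧ t.Pairwise (· ≤ ·) := by
  rw [pairwise_cons_cons_iff_of_trans, pairwise_cons]

theorem List.even_countP_of_even_count_s7 {α : Type*} [DecidableEq α] {p : α → Bool} {l : List α}
    (h : ∀ a, p a → Even (l.count a)) : Even (l.countP p) := by
  rw [← sum_map_count_dedup_filter_eq_countP]
  exact sum_induction _ (fun _ _ => Even.add) .zero
    (by simpa using fun _ a _ ha hx => hx ▸ h a ha)

section CancelPairs

variable {α : Type*} [DecidableEq α] (p : α → Prop) [DecidablePred p]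

def cancelPairs : List α → List α
  | a :: b :: t => if a = b ∧ p a then cancelPairs t else a :: b :: cancelPairs t
  | t => t

def cancelPairsAfterHead : List α → List α
  | [] => []
  | x :: t => x :: cancelPairs p t

variable {p}

theorem cancelPairs_cons₂ (a b : α) (t : List α) :
    cancelPairs p (a :: b :: t) =
      if a = b ∧ p a then cancelPairs p t else a :: b :: cancelPairs p t := rfl

theorem cancelPairs_true_cons₂ (a b : α) (t : List α) :
    cancelPairs (fun _ => True) (a :: b :: t) =
      if a = b then cancelPairs (fun _ => True) t
      else a :: b :: cancelPairs (fun _ => True) t := by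
  simp [cancelPairs_cons₂]

theorem cancelPairs_append_pair {a : α} (ha : p a) (w : List α) :
    ∀ u : List α, Even u.length →
      cancelPairs p (u ++ a :: a :: w) = cancelPairs p (u ++ w) := by
  intro u
  induction u using List.twoStepRec with
  | nil => simp [cancelPairs_cons₂, ha]
  | singleton x => simp
  | cons₂ x y u ih =>
    intro hu
    simp only [cons_append, cancelPairs_cons₂, ih (by simpa [parity_simps] using hu)]

theorem exists_eq_append_pair_of_cancelPairs_ne :
    ∀ {r : List α}, cancelPairs p r ≠ r →
      ∃ a u w, p a ∧ Even u.length ∧ r = u ++ a :: a :: w := by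
  intro r
  induction r using List.twoStepRec with
  | nil => simp [cancelPairs]
  | singleton x => simp [cancelPairs]
  | cons₂ a b t ih =>
    intro h
    by_cases hab : a = b ∧ p a
    · exact ⟨a, [], t, hab.2, .zero, by simp [hab.1]⟩
    · rw [cancelPairs_cons₂, if_neg hab] at h
      obtain ⟨c, u, w, hc, hu, rfl⟩ := ih fun ht => h (by rw [ht])
      exact ⟨c, a :: b :: u, w, hc, by simpa [parity_simps] using hu, rfl⟩

theorem cancelPairs_sublist : ∀ r : List α, cancelPairs p r <+ r := by
  intro r
  induction r using List.twoStepRec with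
  | nil => rfl
  | singleton x => rfl
  | cons₂ a b t ih =>
    rw [cancelPairs_cons₂]
    split_ifs
    · exact ih.trans ((sublist_cons_self b t).trans (sublist_cons_self a _))
    · exact (ih.cons_cons b).cons_cons a

end CancelPairs

theorem cancelPairs_reverse_eq_of_delStepE {L L' : List ℕ} (h : delStepE L L') :
    cancelPairs (fun _ => True) L.reverse = cancelPairs (fun _ => True) L'.reverse := by
  obtain ⟨a, l₁, l₂, hl₂, rfl, rfl⟩ := h
  simpa using cancelPairs_append_pair (p := fun _ : ℕ => True) trivial l₁.reverse l₂.reverse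
    (by simpa using hl₂)

theorem cancelPairs_reverse_of_terminal_delStepE {M : List ℕ} (hM : ∀ M', ¬ delStepE M M') :
    cancelPairs (fun _ => True) M.reverse = M.reverse := by
  by_contra hne
  obtain ⟨a, u, w, -, hu, hrev⟩ := exists_eq_append_pair_of_cancelPairs_ne hne
  refine hM (w.reverse ++ u.reverse) ⟨a, w.reverse, u.reverse, by simpa using hu, ?_, rfl⟩
  simpa using congrArg reverse hrev

theorem reverse_eq_cancelPairs_of_delStepE {L M : List ℕ}
    (h : Relation.ReflTransGen delStepE L M) (hM : ∀ M', ¬ delStepE M M') :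
    M.reverse = cancelPairs (fun _ => True) L.reverse := by
  rw [← cancelPairs_reverse_of_terminal_delStepE hM]
  clear hM
  induction h with
  | refl => rfl
  | tail _ hstep ih => exact (cancelPairs_reverse_eq_of_delStepE hstep).symm.trans ih

theorem cancelPairsAfterHead_reverse_eq_of_delStepOOddVal {L L' : List ℕ}
    (h : delStepOOddVal L L') :
    cancelPairsAfterHead Odd L.reverse = cancelPairsAfterHead Odd L'.reverse := by
  obtain ⟨a, l₁, l₂, ha, ⟨k, hk⟩, rfl, rfl⟩ := h
  obtain ⟨x, u, hxu⟩ := exists_of_length_succ l₂.reverse (by simpa using hk)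
  have hu : Even u.length := ⟨k, by have := congrArg length hxu; simp at this; omega⟩
  simp only [reverse_append, reverse_cons, append_assoc, hxu, cons_append, nil_append,
    cancelPairsAfterHead]
  rw [cancelPairs_append_pair ha _ u hu]

theorem cancelPairsAfterHead_reverse_of_terminal_delStepOOddVal {M : List ℕ}
    (hM : ∀ M', ¬ delStepOOddVal M M') : cancelPairsAfterHead Odd M.reverse = M.reverse := by
  rcases hrev : M.reverse with _ | ⟨x, t⟩
  · rfl
  by_contra hne
  obtain ⟨a, u, w, ha, hu, rfl⟩ :=
    exists_eq_append_pair_of_cancelPairs_ne fun ht => hne (by rw [cancelPairsAfterHead, ht])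
  refine hM (w.reverse ++ (x :: u).reverse) ⟨a, w.reverse, (x :: u).reverse, ha, ?_, ?_, rfl⟩
  · simpa [parity_simps] using hu
  · simpa using congrArg reverse hrev

theorem reverse_eq_cancelPairsAfterHead_of_delStepOOddVal {L M : List ℕ}
    (h : Relation.ReflTransGen delStepOOddVal L M) (hM : ∀ M', ¬ delStepOOddVal M M') :
    M.reverse = cancelPairsAfterHead Odd L.reverse := by
  rw [← cancelPairsAfterHead_reverse_of_terminal_delStepOOddVal hM]
  clear hM
  induction h with
  | refl => rfl
  | tail _ hstep ih =>
    exact (cancelPairsAfterHead_reverse_eq_of_delStepOOddVal hstep).symm.trans ih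

/- A block of `m = r.count v` copies of `v` after `p = r.countP (· < v)` entries keeps its first
copy iff `p` is odd and its last one iff `p + m` is odd. -/
theorem count_cancelPairs_of_sorted :
    ∀ {r : List ℕ}, r.Pairwise (· ≤ ·) → ∀ v, (cancelPairs (fun _ => True) r).count v =
      min (r.count v) (r.countP (· < v) % 2 + (r.countP (· < v) + r.count v) % 2) := by
  intro r
  induction r using List.twoStepRec with
  | nil => simp [cancelPairs]
  | singleton x => intro _ v; by_cases h : x = v <;> simp [cancelPairs, h]
  | cons₂ a b t ih =>
    intro hr v
    obtain ⟨hab, hbt, ht⟩ := pairwise_le_cons₂.1 hr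
    have ih := ih ht v
    have hcount : b ≤ v ∨ t.count v = 0 := or_iff_not_imp_left.2 fun hvb =>
      count_eq_zero.2 fun hv => by have := hbt v hv; omega
    have hcountP : b < v ∨ t.countP (· < v) = 0 := or_iff_not_imp_left.2 fun hvb =>
      countP_eq_zero.2 fun x hx => by have := hbt x hx; simp; omega
    rw [cancelPairs_true_cons₂]
    split_ifs <;> simp only [count_cons, countP_cons, beq_iff_eq, decide_eq_true_eq] <;>
      split_ifs <;> omega

theorem filter_odd_countP_lt_cons₂ {a b : ℕ} {t : List ℕ} (hab : a ≤ b)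
    (hbt : ∀ x ∈ t, b ≤ x) :
    (a :: b :: t).toFinset.filter (fun v => Odd ((a :: b :: t).countP (· < v))) =
      if a = b then t.toFinset.filter (fun v => Odd (t.countP (· < v)))
      else insert b (t.toFinset.filter (fun v => Odd (t.countP (· < v)))) := by
  ext v
  have hcountP : b < v ∨ t.countP (· < v) = 0 := or_iff_not_imp_left.2 fun hvb =>
    countP_eq_zero.2 fun x hx => by have := hbt x hx; simp; omega
  by_cases hvt : v ∈ t
  · have := hbt v hvt
    split_ifs <;> simp [hvt, countP_cons, Nat.odd_iff] <;> split_ifs <;> omega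
  · split_ifs <;> simp [hvt, countP_cons, Nat.odd_iff] <;> split_ifs <;> omega

theorem length_cancelPairs_of_sorted :
    ∀ {r : List ℕ}, r.Pairwise (· ≤ ·) → (cancelPairs (fun _ => True) r).length =
      2 * (r.toFinset.filter (fun v => Odd (r.countP (· < v)))).card + r.length % 2 := by
  intro r
  induction r using List.twoStepRec with
  | nil => simp [cancelPairs]
  | singleton x => intro _; simp [cancelPairs]
  | cons₂ a b t ih =>
    intro hr
    obtain ⟨hab, hbt, ht⟩ := pairwise_le_cons₂.1 hr
    have hb : b ∉ t.toFinset.filter (fun v => Odd (t.countP (· < v))) := fun h => by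
      rw [Finset.mem_filter, countP_eq_zero.2 fun x hx => by simpa using hbt x hx] at h
      simp at h
    rw [cancelPairs_true_cons₂, filter_odd_countP_lt_cons₂ hab hbt]
    split_ifs
    · simp [ih ht]; omega
    · simp [ih ht, Finset.card_insert_of_notMem hb]; omega

theorem countP_filter_even_mod_two {r : List ℕ} (hr : ∀ v, Odd v → Even (r.count v))
    (q : ℕ → Bool) : (r.filter (Even ·)).countP q % 2 = r.countP q % 2 := by
  have hsplit : ∀ l : List ℕ, l.countP q =
      (l.filter (Even ·)).countP q + l.countP (fun x => q x && Odd x) := by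
    intro l
    induction l with
    | nil => rfl
    | cons a l ih =>
      rcases Nat.even_or_odd a with ha | ha <;>
        simp [countP_cons, ha, ih, Nat.not_odd_iff_even.2, Nat.not_even_iff_odd.2] <;>
        omega
  obtain ⟨k, hk⟩ := even_countP_of_even_count_s7 (p := fun x => q x && Odd x) (l := r) (by simp_all)
  rw [hsplit r]
  omega

theorem cancelPairs_filter_even_of_sorted {r : List ℕ} (hr : r.Pairwise (· ≤ ·))
    (hodd : ∀ v, Odd v → Even (r.count v)) :
    cancelPairs (fun _ => True) (r.filter (Even ·)) =
      (cancelPairs (fun _ => True) r).filter (Even ·) := by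
  have hfr : (r.filter (Even ·)).Pairwise (· ≤ ·) := hr.sublist filter_sublist
  refine Perm.eq_of_pairwise' (hfr.sublist (cancelPairs_sublist _))
    ((hr.sublist (cancelPairs_sublist _)).sublist filter_sublist) (perm_iff_count.2 fun v => ?_)
  rcases Nat.even_or_odd v with hv | hv
  · rw [count_cancelPairs_of_sorted hfr, count_filter (by simpa), count_filter (by simpa),
      count_cancelPairs_of_sorted hr, Nat.add_mod, countP_filter_even_mod_two hodd,
      ← Nat.add_mod]
  · have hvf : ∀ l : List ℕ, v ∉ l.filter (Even ·) := by simp [Nat.not_even_iff_odd.2 hv]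
    rw [count_eq_zero_of_not_mem (hvf _), count_eq_zero_of_not_mem fun h =>
      hvf r ((cancelPairs_sublist _).subset h)]

def StrictPairs {α : Type*} [LT α] : List α → Prop
  | a :: b :: t => a < b ∧ StrictPairs t
  | _ => True

theorem StrictPairs.lt_of_cons {α : Type*} [Preorder α] {b : α} {t : List α}
    (h : StrictPairs (b :: t)) (ht : t.Pairwise (· ≤ ·)) :
    (∀ x ∈ t, b < x) ∧ StrictPairs (t.drop 1) := by
  match t, h, ht with
  | [], _, _ => exact ⟨by simp, trivial⟩
  | c :: t, ⟨hbc, h⟩, ht =>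
    refine ⟨fun x hx => ?_, h⟩
    rcases mem_cons.1 hx with rfl | hx
    exacts [hbc, hbc.trans_le (rel_of_pairwise_cons ht hx)]

theorem strictPairs_cancelPairs_of_sorted {α : Type*} [LinearOrder α] :
    ∀ {r : List α}, r.Pairwise (· ≤ ·) → StrictPairs (cancelPairs (fun _ => True) r) := by
  intro r
  induction r using List.twoStepRec with
  | nil => intro _; trivial
  | singleton x => intro _; trivial
  | cons₂ a b t ih =>
    intro hr
    obtain ⟨hab, -, ht⟩ := pairwise_le_cons₂.1 hr
    rw [cancelPairs_true_cons₂]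
    split_ifs with h
    · exact ih ht
    · exact ⟨lt_of_le_of_ne hab h, ih ht⟩

theorem even_of_count_eq_one {l : List ℕ} (hodd : ∀ v, Odd v → Even (l.count v)) {x : ℕ}
    (hx : l.count x = 1) : Even x :=
  Nat.not_odd_iff_even.1 fun h => by simpa [hx] using hodd x h

theorem cancelPairs_odd_eq_filter_even :
    ∀ {t : List ℕ}, t.Pairwise (· ≤ ·) → (∀ v, Odd v → Even (t.count v)) →
      StrictPairs (t.drop 1) → cancelPairs Odd t = t.filter (Even ·) := by
  intro t
  induction t using List.twoStepRec with
  | nil => intros; rfl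
  | singleton x =>
    intro _ hodd _
    have := hodd x
    simp_all [cancelPairs, ← Nat.not_even_iff_odd]
  | cons₂ a b t ih =>
    intro hr hodd hpairs
    obtain ⟨hab, -, ht⟩ := pairwise_le_cons₂.1 hr
    obtain ⟨hbt, hsp⟩ := hpairs.lt_of_cons ht
    have hat : t.count a = 0 := count_eq_zero.2 fun h => (hab.trans_lt (hbt a h)).false
    have hbt : t.count b = 0 := count_eq_zero.2 fun h => (hbt b h).false
    have hcount : ∀ v, (a :: b :: t).count v =
        t.count v + (if a = v then 1 else 0) + (if b = v then 1 else 0) := by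
      intro v; simp only [count_cons, beq_iff_eq]; omega
    rw [cancelPairs_cons₂]
    split_ifs with h
    · obtain ⟨rfl, ha⟩ := h
      rw [ih ht (fun v hv => ?_) hsp]
      · simp [Nat.not_even_iff_odd.2 ha]
      · have := hodd v hv
        rw [hcount] at this
        split_ifs at this <;> simpa [parity_simps] using this
    · have heven : Even a ∧ Even b := by
        by_cases hab : a = b
        · subst hab
          have ha := Nat.not_odd_iff_even.1 fun ha => h ⟨rfl, ha⟩
          exact ⟨ha, ha⟩
        · exact ⟨even_of_count_eq_one hodd (by simp [hcount, hat, Ne.symm hab]),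
            even_of_count_eq_one hodd (by simp [hcount, hbt, hab])⟩
      rw [ih ht (fun v hv => ?_) hsp]
      · simp [heven]
      · have := hodd v hv
        rwa [hcount, if_neg (by rintro rfl; exact Nat.not_even_iff_odd.2 hv heven.1),
          if_neg (by rintro rfl; exact Nat.not_even_iff_odd.2 hv heven.2)] at this

theorem cancelPairsAfterHead_odd_cancelPairs {r : List ℕ} (hr : r.Pairwise (· ≤ ·))
    (hodd : ∀ v, Odd v → Even (r.count v)) :
    cancelPairsAfterHead Odd (cancelPairs (fun _ => True) r) =
      (cancelPairs (fun _ => True) r).filter (Even ·) := by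
  have hs := hr.sublist (cancelPairs_sublist (p := fun _ => True) r)
  have hsp := strictPairs_cancelPairs_of_sorted hr
  have hcount : ∀ v, Odd v → Even ((cancelPairs (fun _ => True) r).count v) := by
    intro v hv
    obtain ⟨k, hk⟩ := hodd v hv
    rw [count_cancelPairs_of_sorted hr, hk, Nat.even_iff]
    omega
  generalize cancelPairs (fun _ => True) r = s at hs hsp hcount
  match s, hs, hsp, hcount with
  | [], _, _, _ => rfl
  | x :: t, hs, hsp, hcount =>
    have ht := hs.of_cons
    obtain ⟨hxt, hsp⟩ := hsp.lt_of_cons ht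
    have hxt : t.count x = 0 := count_eq_zero.2 fun h => (hxt x h).false
    have hx : Even x := even_of_count_eq_one hcount (by simp [hxt])
    have htcount : ∀ v, Odd v → Even (t.count v) := fun v hv => by
      have hvx : x ≠ v := by rintro rfl; exact Nat.not_even_iff_odd.2 hv hx
      simpa [count_cons, hvx] using hcount v hv
    simp [cancelPairsAfterHead, cancelPairs_odd_eq_filter_even ht htcount hsp, hx]

theorem odd_length_padToOdd (c : List ℕ) : Odd (padToOdd c).length := by
  unfold padToOdd; split_ifs with h <;> simp_all [parity_simps]

theorem countP_padToOdd (c : List ℕ) {p : ℕ → Bool} (hp : p 0 = false) :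
    (padToOdd c).countP p = c.countP p := by
  unfold padToOdd; split_ifs <;> simp [hp]

theorem count_padToOdd (c : List ℕ) {v : ℕ} (hv : v ≠ 0) : (padToOdd c).count v = c.count v :=
  countP_padToOdd c (by simpa using hv.symm)

theorem mem_padToOdd {c : List ℕ} {v : ℕ} (hv : v ≠ 0) : v ∈ padToOdd c ↔ v ∈ c := by
  simp only [← count_pos_iff, count_padToOdd c hv]

theorem even_count_padToOdd {c : List ℕ} (hc : ∀ v, Odd v → Even (c.count v)) (v : ℕ)
    (hv : Odd v) : Even ((padToOdd c).count v) := by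
  rw [count_padToOdd c (by rintro rfl; simp at hv)]
  exact hc v hv

theorem pairwise_padToOdd {c : List ℕ} (hc : c.Pairwise (· ≥ ·)) :
    (padToOdd c).Pairwise (· ≥ ·) := by
  unfold padToOdd; split_ifs <;> simp [pairwise_append, hc]

def evenPartsEvenColLen (μ : List ℕ) : Finset ℕ :=
  μ.toFinset.filter fun v => Even v ∧ 0 < v ∧ Even (colLen μ v)

theorem length_cancelPairs_filter_even_padToOdd {μ : List ℕ} (hμ : μ.Pairwise (· ≥ ·))
    (hC : ∀ v, Odd v → Even (μ.count v)) :
    (cancelPairs (fun _ => True) ((padToOdd μ).filter (Even ·)).reverse).length =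
      2 * (evenPartsEvenColLen μ).card + 1 := by
  set r := ((padToOdd μ).filter (Even ·)).reverse
  have hr : r.Pairwise (· ≤ ·) :=
    pairwise_reverse.2 ((pairwise_padToOdd hμ).sublist filter_sublist)
  have hcountP : ∀ q : ℕ → Bool, r.countP q % 2 = (padToOdd μ).countP q % 2 := fun q => by
    rw [countP_reverse, countP_filter_even_mod_two (even_count_padToOdd hC)]
  have hlen : r.length % 2 = 1 := by
    have := hcountP fun _ => true
    simp only [countP_true] at this
    rw [this, ← Nat.odd_iff]
    exact odd_length_padToOdd μ
  suffices h : r.toFinset.filter (fun v => Odd (r.countP (· < v))) = evenPartsEvenColLen μ by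
    rw [length_cancelPairs_of_sorted hr, hlen, h]
  ext v
  rcases Nat.eq_zero_or_pos v with rfl | hv
  · simp [evenPartsEvenColLen]
  have hcol : (padToOdd μ).countP (fun x => ¬ x < v) = colLen μ v := by
    rw [countP_padToOdd μ (by simpa using hv.ne')]
    simp [colLen]
  have hmem : v ∈ r ↔ v ∈ μ ∧ Even v := by simp [r, mem_padToOdd hv.ne']
  -- `r` has odd length, so `#{x < v}` is odd iff `#{x ≥ v}` is even; up to the odd parts,
  -- which come in pairs, `#{x ≥ v}` is `c_v(μ)`.
  have hodd : Odd (r.countP (· < v)) ↔ Even (colLen μ v) := by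
    have hsplit := length_eq_countP_add_countP (fun x => decide (x < v)) (l := r)
    have := hcountP fun x => ¬ x < v
    simp only [decide_eq_true_eq] at hsplit
    rw [Nat.odd_iff, Nat.even_iff]
    omega
  simp only [evenPartsEvenColLen, Finset.mem_filter, mem_toFinset, hmem, hodd]
  tauto

theorem colLen_eq_colLen_succ_add_count_s7 (μ : List ℕ) (v : ℕ) :
    colLen μ v = colLen μ (v + 1) + μ.count v := by
  induction μ with
  | nil => rfl
  | cons a μ ih =>
    simp only [colLen] at *
    simp only [countP_cons, count_cons, ih, beq_iff_eq, decide_eq_true_eq]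
    split_ifs <;> omega

theorem mem_iff_colLen_succ_lt {μ : List ℕ} {v : ℕ} :
    v ∈ μ ↔ colLen μ (v + 1) < colLen μ v := by
  rw [colLen_eq_colLen_succ_add_count_s7 μ v, ← count_pos_iff]
  omega

theorem colLen_antitone (μ : List ℕ) : Antitone (colLen μ) :=
  fun _ _ h => countP_mono_left fun x _ hx => by simp at hx ⊢; omega

theorem le_foldr_max_of_colLen_pos {μ : List ℕ} {j : ℕ} (h : 0 < colLen μ j) :
    j ≤ μ.foldr max 0 := by
  obtain ⟨x, hx, hjx⟩ := countP_pos_iff.1 h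
  exact le_max_of_le' 0 hx (by simpa using hjx)

theorem pairwise_transposeList (μ : List ℕ) : (transposeList μ).Pairwise (· ≥ ·) :=
  pairwise_map.2 (pairwise_lt_range.imp fun h => colLen_antitone μ (by omega))

theorem colLen_transposeList (μ : List ℕ) (w : ℕ) :
    colLen (transposeList μ) w = Nat.count (fun i => w ≤ colLen μ (i + 1)) (μ.foldr max 0) := by
  simp [colLen, transposeList, Nat.count, countP_map, Function.comp_def]

theorem le_colLen_transposeList_iff {μ : List ℕ} {w j : ℕ} (hw : 0 < w) (hj : 0 < j) :
    j ≤ colLen (transposeList μ) w ↔ w ≤ colLen μ j := by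
  rw [colLen_transposeList]
  constructor
  · intro h
    by_contra! hlt
    have hnot : ∀ k, ¬ w ≤ colLen μ (j - 1 + k + 1) := fun k hk => by
      have := colLen_antitone μ (show j ≤ j - 1 + k + 1 by omega); omega
    generalize μ.foldr max 0 = M at h
    rcases le_or_gt M (j - 1) with hM | hM
    · have := Nat.count_le (p := fun i => w ≤ colLen μ (i + 1)) (n := M); omega
    · obtain ⟨m, rfl⟩ := Nat.exists_eq_add_of_le hM.le
      rw [Nat.count_add, Nat.count_iff_forall_not.2 fun k _ => hnot k] at h
      have := Nat.count_le (p := fun i => w ≤ colLen μ (i + 1)) (n := j - 1); omega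
  · intro h
    calc j = Nat.count (fun i => w ≤ colLen μ (i + 1)) j :=
          (Nat.count_iff_forall.2 fun i hi => h.trans (colLen_antitone μ (by omega))).symm
      _ ≤ _ := Nat.count_monotone _ (le_foldr_max_of_colLen_pos (hw.trans_le h))

def IsEvenDrop (f : ℕ → ℕ) (v : ℕ) : Prop :=
  f (v + 1) < f v ∧ Even v ∧ 0 < v ∧ Even (f v)

theorem IsEvenDrop.dual {f g : ℕ → ℕ} (hfg : ∀ i j, 0 < i → 0 < j → (i ≤ f j ↔ j ≤ g i))
    {v : ℕ} (h : IsEvenDrop f v) : IsEvenDrop g (f v) ∧ g (f v) = v := by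
  obtain ⟨hdrop, hv, hpos, hfv⟩ := h
  have hw : 0 < f v := by omega
  have h₁ : v ≤ g (f v) := (hfg _ _ hw hpos).1 le_rfl
  have h₂ : ¬ v + 1 ≤ g (f v) := fun h => by have := (hfg _ _ hw (by omega)).2 h; omega
  have h₃ : ¬ v ≤ g (f v + 1) := fun h => by have := (hfg _ _ (by omega) hpos).2 h; omega
  have hgf : g (f v) = v := by omega
  exact ⟨⟨by omega, hfv, hw, by rwa [hgf]⟩, hgf⟩

theorem mem_evenPartsEvenColLen {μ : List ℕ} {v : ℕ} :
    v ∈ evenPartsEvenColLen μ ↔ IsEvenDrop (colLen μ) v := by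
  rw [evenPartsEvenColLen, Finset.mem_filter, mem_toFinset, mem_iff_colLen_succ_lt, IsEvenDrop]

theorem card_evenPartsEvenColLen_transposeList (μ : List ℕ) :
    (evenPartsEvenColLen (transposeList μ)).card = (evenPartsEvenColLen μ).card := by
  have hμ : ∀ i j, 0 < i → 0 < j → (i ≤ colLen μ j ↔ j ≤ colLen (transposeList μ) i) :=
    fun i j hi hj => (le_colLen_transposeList_iff hi hj).symm
  have hT : ∀ i j, 0 < i → 0 < j → (i ≤ colLen (transposeList μ) j ↔ j ≤ colLen μ i) :=
    fun i j hi hj => le_colLen_transposeList_iff hj hi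
  refine Finset.card_bij' (fun w _ => colLen (transposeList μ) w) (fun v _ => colLen μ v)
    (fun w hw => ?_) (fun v hv => ?_) (fun w hw => ?_) (fun v hv => ?_)
  · exact mem_evenPartsEvenColLen.2 (mem_evenPartsEvenColLen.1 hw |>.dual hT).1
  · exact mem_evenPartsEvenColLen.2 (mem_evenPartsEvenColLen.1 hv |>.dual hμ).1
  · exact (mem_evenPartsEvenColLen.1 hw |>.dual hT).2
  · exact (mem_evenPartsEvenColLen.1 hv |>.dual hμ).2

theorem even_count_of_forall_mem {l : List ℕ} (h : ∀ e ∈ l, Odd e → Even (l.count e)) (v : ℕ)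
    (hv : Odd v) : Even (l.count v) := by
  by_cases hvl : v ∈ l
  · exact h v hvl hv
  · simp [count_eq_zero_of_not_mem hvl]

/-- Let `l` be a special type C partition of `2n`.
Row procedure: pad the list of parts with one zero to odd length, delete all odd entries,
then repeatedly delete two equal adjacent entries at positions `2t+1` and `2t` (`t ≥ 0`)
until no such pair remains; the remaining number of entries is `2q+1`.
Column procedure: take the padded column list (padded with zeros to odd length);
repeatedly delete two equal adjacent entries at positions `2t+1` and `2t` until no such
pair remains; then repeatedly delete two equal adjacent entries of odd value at positions
`2t` and `2t-1` until no such pair remains; the remaining number of entries is `2q+1`.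
Both counts are independent of all choices, with the same `q`. -/
theorem typeC_LusztigQuotient_rows_eq_columns (n : ℕ) (l : List ℕ)
    (hpart : IsPartitionOf (2 * n) l)
    (hC : ∀ e ∈ l, Odd e → Even (l.count e))
    (hspecial : ∀ e ∈ transposeList l, Odd e → Even ((transposeList l).count e)) :
    ∃ q : ℕ,
      (∀ M : List ℕ,
        Relation.ReflTransGen delStepE ((padToOdd l).filter (fun x => decide (Even x))) M →
        (∀ M', ¬ delStepE M M') → M.length = 2 * q + 1) ∧
      (∀ M₁ M₂ : List ℕ,
        Relation.ReflTransGen delStepE (padToOdd (transposeList l)) M₁ →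
        (∀ M', ¬ delStepE M₁ M') →
        Relation.ReflTransGen delStepOOddVal M₁ M₂ →
        (∀ M', ¬ delStepOOddVal M₂ M') → M₂.length = 2 * q + 1) := by
  have hT := even_count_of_forall_mem hspecial
  refine ⟨(evenPartsEvenColLen l).card, fun M hM hterm => ?_,
    fun M₁ M₂ h₁ hterm₁ h₂ hterm₂ => ?_⟩
  · rw [← length_reverse, reverse_eq_cancelPairs_of_delStepE hM hterm,
      length_cancelPairs_filter_even_padToOdd hpart.1 (even_count_of_forall_mem hC)]
  · have hr := pairwise_reverse.2 (pairwise_padToOdd (pairwise_transposeList l))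
    have hodd : ∀ v, Odd v → Even ((padToOdd (transposeList l)).reverse.count v) :=
      fun v hv => by simpa using even_count_padToOdd hT v hv
    rw [← length_reverse, reverse_eq_cancelPairsAfterHead_of_delStepOOddVal h₂ hterm₂,
      reverse_eq_cancelPairs_of_delStepE h₁ hterm₁,
      cancelPairsAfterHead_odd_cancelPairs hr hodd, ← cancelPairs_filter_even_of_sorted hr hodd,
      filter_reverse, length_cancelPairs_filter_even_padToOdd (pairwise_transposeList l) hT,
      card_evenPartsEvenColLen_transposeList]
end

section
/- Let q ≥ 0, let a_{2q+1} ≥ a_{2q} ≥ ⋯ ≥ a_1 ≥ 2 be even integers, let a_0 be an even integer with a_1 ≥ a_0 ≥ 0, let I ⊆ {1,…,q} satisfy a_{2i} = a_{2i−1} for every i ∈ I, and let μ_1,…,μ_x and ν_1,…,ν_y be positive integers. Let P be the partition whose multiset of parts is {a_{2q+1}−1} ⊎ {a_{2i}, a_{2i−1} : i ∈ I} ⊎ {a_{2j}+1, a_{2j−1}−1 : j ∈ {1,…,q}∖I} ⊎ {a_0+1} ⊎ {μ_u, μ_u : 1 ≤ u ≤ x} ⊎ {ν_v, ν_v : 1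 ≤ v ≤ y}, and write |P| = 2n. Then the multiset of the n largest elements of H(P) equals {a_{2q+1}−2, a_{2q+1}−4, …, 2, 0} ⊎ (⊎_{i∈I} K_{a_{2i}}) ⊎ (⊎_{j∉I} S(a_{2j}, a_{2j−1})) ⊎ {a_0, a_0−2, …, 4, 2} ⊎ (⊎_u K_{μ_u}) ⊎ (⊎_v K_{ν_v}), where for even integers a ≥ b ≥ 2 we set S(a,b) := {a, a−2, …, b+2, b} ⊎ {b−2, b−2, b−4, b−4, …, 2, 2} ⊎ {0}. (This is the computation at the heart of Theorem C for G = SO(2n,ℂ), non-very-even dual orbits: the Dynkin element h^∨ of the dual orbit O^∨ ⊆ so(2n,ℂ) attached by Sommers' canonical preimage to (O, C_I) coincides with the maximal term Ψ(O, π) of R(Õ^{C_I}), proving the Achar–Sommers conjecture in type D.) -/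
/-- The multiset `K_j`: each of `j-1, j-3, …` down to `2` (if `j` is odd) or `1` (if `j`
is even) with multiplicity 2, together with a single `0` when `j` is odd. -/
def Kmult (j : ℕ) : Multiset ℕ :=
  if Even j then 2 • (((List.range (j / 2)).map (fun i => 2 * i + 1) : List ℕ) : Multiset ℕ)
  else 2 • (((List.range (j / 2)).map (fun i => 2 * i + 2) : List ℕ) : Multiset ℕ) + {0}

/-- The arithmetic string `{r-1, r-3, …, 3-r, 1-r}` attached to a part `r`. -/
def hString (r : ℕ) : Multiset ℤ :=
  (((List.range r).map (fun t => (r : ℤ) - 1 - 2 * t) : List ℤ) : Multiset ℤ)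

/-- `H(P)`: the multiset union over the parts `r` of `P` of the strings `{r-1, …, 1-r}`. -/
def HofP (P : Multiset ℕ) : Multiset ℤ := P.bind hString

/-- The multiset of the `n` largest elements of `M`. -/
def topN (M : Multiset ℤ) (n : ℕ) : Multiset ℤ :=
  (((M.sort (· ≤ ·)).reverse.take n : List ℤ) : Multiset ℤ)

/-- The multiset `{m, m-2, …, 4, 2}` of positive even numbers up to an even number `m`. -/
def evensUpTo (m : ℕ) : Multiset ℕ :=
  (((List.range (m / 2)).map (fun i => 2 * i + 2) : List ℕ) : Multiset ℕ)

/-- The multiset `{m-2, m-4, …, 2, 0}` of even numbers below an even number `m`. -/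
def evensBelow (m : ℕ) : Multiset ℕ :=
  (((List.range (m / 2)).map (fun i => 2 * i) : List ℕ) : Multiset ℕ)

/-- For even `a ≥ b ≥ 2`, the multiset
`S(a,b) = {a, a-2, …, b+2, b} ⊎ {b-2, b-2, b-4, b-4, …, 2, 2} ⊎ {0}`. -/
def Smult (a b : ℕ) : Multiset ℕ :=
  (((List.range ((a - b) / 2 + 1)).map (fun i => b + 2 * i) : List ℕ) : Multiset ℕ)
    + 2 • evensUpTo (b - 2) + {0}

/-!
`H(P)` is symmetric under negation, so once it is written as `R ⊎ (-R)` for a multiset `R` of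
naturals, its `|R| = |P| / 2` largest elements are `R` itself. The decomposition is computed part
by part: a repeated part `m, m` contributes `K_m ⊎ -K_m`, and an odd part `2s + 1` contributes
`{2s, …, 2} ⊎ {0} ⊎ -{2s, …, 2}`. The odd parts come in pairs, `a_{2j} + 1, a_{2j-1} - 1` for
`j ∉ I` and `a_{2q+1} - 1, a_0 + 1`, and the two zeros of a pair go one to each half; for
`j ∉ I` the positive half is `{a_{2j}, …, 2} ⊎ {a_{2j-1} - 2, …, 2} ⊎ {0} = S(a_{2j}, a_{2j-1})`.
-/

def symmetrize (R : Multiset ℕ) : Multiset ℤ :=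
  R.map (Nat.cast : ℕ → ℤ) + R.map (fun z : ℕ => -(z : ℤ))

lemma symmetrize_singleton (k : ℕ) : symmetrize {k} = {(k : ℤ), -(k : ℤ)} := rfl

lemma symmetrize_singleton_zero : symmetrize {0} = {0} + {0} := rfl

lemma symmetrize_add (R S : Multiset ℕ) :
    symmetrize (R + S) = symmetrize R + symmetrize S := by
  simp only [symmetrize, Multiset.map_add]
  abel

lemma symmetrize_bind {α : Type*} (s : Multiset α) (f : α → Multiset ℕ) :
    symmetrize (s.bind f) = s.bind fun x => symmetrize (f x) := by
  simp only [symmetrize, Multiset.map_bind, Multiset.bind_add]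

lemma card_symmetrize (R : Multiset ℕ) :
    Multiset.card (symmetrize R) = 2 * Multiset.card R := by
  rw [symmetrize, Multiset.card_add, Multiset.card_map, Multiset.card_map, two_mul]

lemma topN_add_of_forall_le (A B : Multiset ℤ) (hBA : ∀ b ∈ B, ∀ x ∈ A, b ≤ x) :
    topN (A + B) (Multiset.card A) = A := by
  have hsort : (A + B).sort (· ≤ ·) = B.sort (· ≤ ·) ++ A.sort (· ≤ ·) := by
    refine List.Perm.eq_of_pairwise' (Multiset.pairwise_sort _ _) ?_ ?_
    · exact List.pairwise_append.2 ⟨Multiset.pairwise_sort _ _, Multiset.pairwise_sort _ _,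
        fun b hb x hx => hBA b ((Multiset.mem_sort _).1 hb) x ((Multiset.mem_sort _).1 hx)⟩
    · rw [← Multiset.coe_eq_coe, ← Multiset.coe_add, Multiset.sort_eq, Multiset.sort_eq,
        Multiset.sort_eq, add_comm]
  rw [topN, hsort, List.reverse_append,
    List.take_left' (by rw [List.length_reverse, Multiset.length_sort]),
    Multiset.coe_reverse, Multiset.sort_eq]

lemma topN_symmetrize (R : Multiset ℕ) :
    topN (symmetrize R) (Multiset.card R) = R.map (Nat.cast : ℕ → ℤ) := by
  rw [← Multiset.card_map (Nat.cast : ℕ → ℤ) R]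
  refine topN_add_of_forall_le _ _ fun b hb x hx => ?_
  obtain ⟨k, -, rfl⟩ := Multiset.mem_map.1 hb
  obtain ⟨l, -, rfl⟩ := Multiset.mem_map.1 hx
  omega

lemma Kmult_add_two (m : ℕ) : Kmult (m + 2) = Kmult m + {m + 1, m + 1} := by
  have hdiv : (m + 2) / 2 = m / 2 + 1 := by omega
  have hpar : Even (m + 2) ↔ Even m := by simp [Nat.even_add]
  by_cases hm : Even m
  · rw [Kmult, Kmult, if_pos (hpar.2 hm), if_pos hm, hdiv, List.range_succ, List.map_append,
      List.map_singleton, show 2 * (m / 2) + 1 = m + 1 by grind, ← Multiset.coe_add, smul_add]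
    rfl
  · rw [Kmult, Kmult, if_neg (mt hpar.1 hm), if_neg hm, hdiv, List.range_succ, List.map_append,
      List.map_singleton, show 2 * (m / 2) + 2 = m + 1 by grind, ← Multiset.coe_add, smul_add,
      add_right_comm]
    rfl

lemma evensUpTo_add_two_mul {m : ℕ} (hm : Even m) (d : ℕ) :
    evensUpTo (m + 2 * d)
      = evensUpTo m + (((List.range d).map fun i => m + 2 + 2 * i : List ℕ) : Multiset ℕ) := by
  obtain ⟨k, rfl⟩ := hm
  rw [evensUpTo, evensUpTo, show (k + k + 2 * d) / 2 = k + d by omega,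
    show (k + k) / 2 = k by omega, List.range_add, List.map_append, List.map_map,
    ← Multiset.coe_add, Function.comp_def]
  congr 3
  funext i
  ring

lemma evensBelow_add_two (m : ℕ) : evensBelow (m + 2) = evensUpTo m + {0} := by
  rw [evensBelow, evensUpTo, show (m + 2) / 2 = m / 2 + 1 by omega, List.range_succ_eq_map,
    List.map_cons, List.map_map, Function.comp_def, ← Multiset.cons_coe,
    ← Multiset.singleton_add, add_comm]
  rfl

lemma Smult_eq {a b : ℕ} (ha : Even a) (hb : Even b) (hb2 : 2 ≤ b) (hba : b ≤ a) :
    Smult a b = evensUpTo a + evensUpTo (b - 2) + {0} := by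
  have hb' : Even (b - 2) := by grind
  have hsplit := evensUpTo_add_two_mul hb' ((a - b) / 2 + 1)
  rw [show b - 2 + 2 * ((a - b) / 2 + 1) = a by grind, show b - 2 + 2 = b by omega] at hsplit
  rw [Smult, hsplit, two_nsmul]
  abel

lemma hString_eq_map_range (r : ℕ) :
    hString r = (Multiset.range r).map (fun t : ℕ => (r : ℤ) - 1 - 2 * t) := by
  rw [hString, Multiset.range, Multiset.map_coe]
  congr 1
  -- the coercion `List ℕ → List ℤ` in `hString` unfolds to a `flatMap`
  exact (congrArg _ (List.flatMap_pure_eq_map _ _)).trans (List.map_map ..)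

lemma card_hString (r : ℕ) : Multiset.card (hString r) = r := by
  rw [hString_eq_map_range, Multiset.card_map, Multiset.card_range]

lemma hString_add_two (m : ℕ) : hString (m + 2) = hString m + symmetrize {m + 1} := by
  rw [hString_eq_map_range, hString_eq_map_range, show m + 2 = 1 + (m + 1) by omega,
    Multiset.range_add, Multiset.range_succ m, show Multiset.range 1 = {0} from rfl]
  simp only [Multiset.map_cons, Multiset.map_add, Multiset.map_singleton, Multiset.map_map,
    Function.comp_def, symmetrize_singleton]
  push_cast
  rw [Multiset.map_congr rfl fun (t : ℕ) _ =>
    show 1 + ((m : ℤ) + 1) - 1 - 2 * (1 + t) = m - 1 - 2 * t by ring]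
  simp only [Multiset.insert_eq_cons, ← Multiset.singleton_add]
  ring_nf
  abel

lemma hString_add_self (m : ℕ) : hString m + hString m = symmetrize (Kmult m) := by
  induction m using Nat.twoStepInduction with
  | zero => rfl
  | one => rfl
  | more m ih _ =>
    rw [hString_add_two, Kmult_add_two, symmetrize_add, ← ih, Multiset.insert_eq_cons,
      ← Multiset.singleton_add, symmetrize_add]
    abel

lemma hString_succ_of_even {m : ℕ} (hm : Even m) :
    hString (m + 1) = symmetrize (evensUpTo m) + {0} := by
  obtain ⟨k, rfl⟩ := hm
  induction k with
  | zero => rfl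
  | succ k ih =>
    have hsplit := evensUpTo_add_two_mul (Even.add_self k) 1
    rw [show k + 1 + (k + 1) + 1 = k + k + 1 + 2 by ring, hString_add_two, ih,
      show k + 1 + (k + 1) = k + k + 2 * 1 by ring, hsplit, symmetrize_add]
    simp only [List.range_one, List.map_singleton, mul_zero, add_zero, Multiset.coe_singleton]
    abel

lemma hString_succ_add_hString_pred {a b : ℕ} (ha : Even a) (hb : Even b) (hb2 : 2 ≤ b)
    (hba : b ≤ a) : hString (a + 1) + hString (b - 1) = symmetrize (Smult a b) := by
  rw [Smult_eq ha hb hb2 hba, show b - 1 = b - 2 + 1 by omega, hString_succ_of_even ha,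
    hString_succ_of_even (by grind), symmetrize_add, symmetrize_add, symmetrize_singleton_zero]
  abel

lemma HofP_add (P Q : Multiset ℕ) : HofP (P + Q) = HofP P + HofP Q :=
  Multiset.add_bind _ _ _

lemma HofP_singleton (r : ℕ) : HofP {r} = hString r :=
  Multiset.singleton_bind _ _

lemma HofP_pair (r s : ℕ) : HofP {r, s} = hString r + hString s := by
  rw [HofP, Multiset.insert_eq_cons, Multiset.cons_bind, Multiset.singleton_bind]

lemma HofP_bind {α : Type*} (s : Multiset α) (f : α → Multiset ℕ) :
    HofP (s.bind f) = s.bind fun x => HofP (f x) :=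
  Multiset.bind_assoc

lemma card_HofP (P : Multiset ℕ) : Multiset.card (HofP P) = P.sum := by
  rw [HofP, Multiset.card_bind, Function.comp_def]
  simp only [card_hString, Multiset.map_id']

lemma topN_HofP_of_eq_symmetrize {P R : Multiset ℕ} (h : HofP P = symmetrize R) :
    topN (HofP P) (P.sum / 2) = R.map (fun z => (z : ℤ)) := by
  have hcard : P.sum / 2 = Multiset.card R := by
    rw [← card_HofP, h, card_symmetrize]
    omega
  rw [hcard, h, topN_symmetrize]
  -- the right-hand side elaborates as a map over `R` coerced to `Multiset ℤ` via `Multiset.bind`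
  simp

lemma HofP_two_nsmul (s : Multiset ℕ) : HofP (2 • s) = symmetrize (s.bind Kmult) := by
  rw [two_nsmul, HofP_add, HofP, ← Multiset.bind_add, symmetrize_bind]
  exact Multiset.bind_congr fun m _ => hString_add_self m

theorem acharSommers_typeD_general (q : ℕ) (a : ℕ → ℕ) (I : Finset ℕ) (μ ν : List ℕ)
    (ha_even : ∀ i, i ≤ 2 * q + 1 → Even (a i))
    (ha_mono : ∀ i, i < 2 * q + 1 → a i ≤ a (i + 1))
    (ha_ge : ∀ i, 1 ≤ i → i ≤ 2 * q + 1 → 2 ≤ a i)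
    (hIa : ∀ i ∈ I, a (2 * i) = a (2 * i - 1))
    (P : Multiset ℕ)
    (hP : P = ({a (2 * q + 1) - 1} : Multiset ℕ)
        + I.val.bind (fun i => ({a (2 * i), a (2 * i - 1)} : Multiset ℕ))
        + ((Finset.Icc 1 q) \ I).val.bind
            (fun j => ({a (2 * j) + 1, a (2 * j - 1) - 1} : Multiset ℕ))
        + ({a 0 + 1} : Multiset ℕ)
        + 2 • (μ : Multiset ℕ) + 2 • (ν : Multiset ℕ)) :
    topN (HofP P) (P.sum / 2)
      = (evensBelow (a (2 * q + 1))
          + I.val.bind (fun i => Kmult (a (2 * i)))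
          + ((Finset.Icc 1 q) \ I).val.bind (fun j => Smult (a (2 * j)) (a (2 * j - 1)))
          + evensUpTo (a 0)
          + (μ : Multiset ℕ).bind Kmult
          + (ν : Multiset ℕ).bind Kmult).map (fun z => (z : ℤ)) := by
  have hpairs : ∀ i ∈ I.val, HofP {a (2 * i), a (2 * i - 1)} = symmetrize (Kmult (a (2 * i))) :=
    fun i hi => by rw [HofP_pair, hIa i hi, hString_add_self]
  have hsplit : ∀ j ∈ (Finset.Icc 1 q \ I).val, HofP {a (2 * j) + 1, a (2 * j - 1) - 1}
      = symmetrize (Smult (a (2 * j)) (a (2 * j - 1))) := fun j hj => by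
    obtain ⟨hj1, hjq⟩ := Finset.mem_Icc.1 (Finset.mem_sdiff.1 hj).1
    have hle := ha_mono (2 * j - 1) (by omega)
    rw [Nat.sub_add_cancel (by omega)] at hle
    rw [HofP_pair, hString_succ_add_hString_pred (ha_even _ (by omega)) (ha_even _ (by omega))
      (ha_ge _ (by omega) (by omega)) hle]
  obtain ⟨m, hm⟩ : ∃ m, a (2 * q + 1) = m + 2 :=
    ⟨a (2 * q + 1) - 2, by have := ha_ge (2 * q + 1) (by omega) le_rfl; omega⟩
  have hm_even : Even m := by simpa [hm, parity_simps] using ha_even (2 * q + 1) le_rfl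
  apply topN_HofP_of_eq_symmetrize
  rw [hP]
  simp only [HofP_add, HofP_singleton, HofP_bind, HofP_two_nsmul, symmetrize_add,
    symmetrize_bind, Multiset.bind_congr hpairs, Multiset.bind_congr hsplit]
  rw [hm, show m + 2 - 1 = m + 1 by omega, hString_succ_of_even hm_even,
    hString_succ_of_even (ha_even 0 (by omega)), evensBelow_add_two, symmetrize_add,
    symmetrize_singleton_zero]
  abel

/-- Achar–Sommers conjecture, type D computation (non-very-even dual orbits): for even
`a_{2q+1} ≥ ⋯ ≥ a_1 ≥ 2`, even `a_0` with `a_1 ≥ a_0 ≥ 0`, `I ⊆ {1,…,q}` with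
`a_{2i} = a_{2i-1}` for `i ∈ I`, and positive integers `μ_u`, `ν_v`, let `P` be the
partition with parts `{a_{2q+1}-1} ⊎ {a_{2i}, a_{2i-1} : i ∈ I}
⊎ {a_{2j}+1, a_{2j-1}-1 : j ∉ I} ⊎ {a_0+1} ⊎ {μ_u, μ_u} ⊎ {ν_v, ν_v}`, `|P| = 2n`.
Then the `n` largest elements of `H(P)` form the multiset
`{a_{2q+1}-2, …, 2, 0} ⊎ (⊎_{i∈I} K_{a_{2i}}) ⊎ (⊎_{j∉I} S(a_{2j}, a_{2j-1}))
⊎ {a_0, a_0-2, …, 4, 2} ⊎ (⊎_u K_{μ_u}) ⊎ (⊎_v K_{ν_v})`. -/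
theorem acharSommers_typeD (q : ℕ) (a : ℕ → ℕ) (I : Finset ℕ) (μ ν : List ℕ)
    (ha_even : ∀ i, i ≤ 2 * q + 1 → Even (a i))
    (ha_mono : ∀ i, i < 2 * q + 1 → a i ≤ a (i + 1))
    (ha_ge : ∀ i, 1 ≤ i → i ≤ 2 * q + 1 → 2 ≤ a i)
    (hI : I ⊆ Finset.Icc 1 q)
    (hIa : ∀ i ∈ I, a (2 * i) = a (2 * i - 1))
    (hμ : ∀ m ∈ μ, 0 < m) (hν : ∀ m ∈ ν, 0 < m)
    (P : Multiset ℕ)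
    (hP : P = ({a (2 * q + 1) - 1} : Multiset ℕ)
        + I.val.bind (fun i => ({a (2 * i), a (2 * i - 1)} : Multiset ℕ))
        + ((Finset.Icc 1 q) \ I).val.bind
            (fun j => ({a (2 * j) + 1, a (2 * j - 1) - 1} : Multiset ℕ))
        + ({a 0 + 1} : Multiset ℕ)
        + 2 • (μ : Multiset ℕ) + 2 • (ν : Multiset ℕ)) :
    topN (HofP P) (P.sum / 2)
      = (evensBelow (a (2 * q + 1))
          + I.val.bind (fun i => Kmult (a (2 * i)))
          + ((Finset.Icc 1 q) \ I).val.bind (fun j => Smult (a (2 * j)) (a (2 * j - 1)))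
          + evensUpTo (a 0)
          + (μ : Multiset ℕ).bind Kmult
          + (ν : Multiset ℕ).bind Kmult).map (fun z => (z : ℤ)) :=
  acharSommers_typeD_general q a I μ ν ha_even ha_mono ha_ge hIa P hP
end
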